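/- Under the resistance-bound hypotheses of the previous statement, let $\pi^\epsilon$ be the stationary distribution of $K^\epsilon$, which by the Markov chain tree theorem satisfies $\pi^\epsilon(v)/\pi^\epsilon(v') = \mu^\epsilon(v)/\mu^\epsilon(v')$ for all $v, v'$. Then with $v^* \in \arg\min_v \gamma(v)$, there is a constant $C$ independent of $\epsilon$ (one may take $C = (C_2/C_1)^{|V|-1} \max_v |\mathcal{T}(v)|$) such that for all $\epsilon \in (0,1)$ and all $v$, $\pi^\epsilon(v) \le \frac{\pi^\epsilon(v)}{\pi^\epsilon(v^*)} \le C \epsilon^{\gamma(v) - \min_{v'} \gamma(v')}$. -/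

import Mathlib

open Finset
open scoped ENNReal

variable {V : Type*} [Fintype V] [DecidableEq V]

/-- A spanning tree rooted at `v`, represented by its successor function `f`:
from every vertex there is a directed path `u → f u → f (f u) → ⋯` reaching `v`.
Its edge set is `{(u, f u) : u ≠ v}`, which has exactly `|V| - 1` edges. -/
def IsRootedTree (f : V → V) (v : V) : Prop := f v = v ∧ ∀ u, ∃ k, f^[k] u = v

open Classical in
/-- The set of spanning trees rooted at `v`. -/
noncomputable def rootedTrees (v : V) : Finset (V → V) :=
  Finset.univ.filter (fun f => IsRootedTree f v)

/-- The weight `∏_{(u → u') ∈ T} K(u' ∣ u)` of a rooted tree (here `K u u'` denotes the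
transition probability from `u` to `u'`). -/
noncomputable def treeWeight (K : V → V → ℝ) (v : V) (f : V → V) : ℝ :=
  ∏ u ∈ Finset.univ.erase v, K u (f u)

/-- The total resistance `∑_{(u → u') ∈ T} R(u → u')` of a rooted tree. -/
noncomputable def treeResist (R : V → V → ℝ≥0∞) (v : V) (f : V → V) : ℝ≥0∞ :=
  ∑ u ∈ Finset.univ.erase v, R u (f u)

/-- `ε^r` for `r ∈ [0,∞]`, with `ε^∞ = 0`. -/
noncomputable def epow (ε : ℝ) (r : ℝ≥0∞) : ℝ := if r = ⊤ then 0 else ε ^ r.toReal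

/-- The Markov-chain-tree weight `μ^ε(v) = ∑_{T ∈ 𝒯(v)} ∏_{(u→u') ∈ T} K^ε(u' ∣ u)`. -/
noncomputable def treeMu (K : V → V → ℝ) (v : V) : ℝ :=
  ∑ f ∈ rootedTrees v, treeWeight K v f

/-- The stochastic potential `γ(v) = min_{T ∈ 𝒯(v)} R(T)`. -/
noncomputable def stochPot (R : V → V → ℝ≥0∞) (v : V) : ℝ≥0∞ :=
  (rootedTrees v).inf (treeResist R v)

/-- `k`-step transition probabilities of a kernel. -/
noncomputable def kerPow (K : V → V → ℝ) : ℕ → V → V → ℝ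
  | 0 => fun v v' => if v = v' then 1 else 0
  | (k + 1) => fun v v' => ∑ u, K v u * kerPow K k u v'

/-- A kernel is ergodic (irreducible and aperiodic, i.e. primitive) if some power is
entrywise positive. -/
def IsErgodicKernel (K : V → V → ℝ) : Prop := ∃ m : ℕ, ∀ v v', 0 < kerPow K m v v'

/-! Each edge weight lies between `C₁ ε^{R}` and `C₂ ε^{R}`, so a tree `T` has weight between
`C₁^{|V|-1} ε^{R(T)}` and `C₂^{|V|-1} ε^{R(T)}`. Hence `μ^ε(v)` is at least `C₁^{|V|-1} ε^{γ(v)}`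
(a tree realizing `γ(v)`) and at most `|𝒯(v)| C₂^{|V|-1} ε^{γ(v)}` (every tree has `R(T) ≥ γ(v)`
and `ε ≤ 1`). Ergodicity gives a tree of positive weight rooted at `v*`, so `μ^ε(v*) > 0` and the
tree identity turns `π^ε(v)/π^ε(v*)` into `μ^ε(v)/μ^ε(v*)`, which the two bounds control. -/

lemma epow_nonneg {ε : ℝ} (hε : 0 ≤ ε) (r : ℝ≥0∞) : 0 ≤ epow ε r := by
  unfold epow
  split
  · exact le_rfl
  · exact Real.rpow_nonneg hε _

lemma epow_add {ε : ℝ} (hε : 0 < ε) (a b : ℝ≥0∞) :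
    epow ε (a + b) = epow ε a * epow ε b := by
  rcases eq_or_ne a ⊤ with rfl | ha
  · simp [epow]
  rcases eq_or_ne b ⊤ with rfl | hb
  · simp [epow]
  rw [epow, epow, epow, if_neg ha, if_neg hb, if_neg (ENNReal.add_ne_top.2 ⟨ha, hb⟩),
    ENNReal.toReal_add ha hb, Real.rpow_add hε]

lemma epow_sum {ε : ℝ} (hε : 0 < ε) {ι : Type*} (s : Finset ι) (r : ι → ℝ≥0∞) :
    epow ε (∑ i ∈ s, r i) = ∏ i ∈ s, epow ε (r i) := by
  classical
  induction s using Finset.induction_on with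
  | empty => simp [epow]
  | insert _ _ h ih => rw [sum_insert h, prod_insert h, epow_add hε, ih]

lemma epow_le_epow_of_exponent_ge {ε : ℝ} (hε0 : 0 < ε) (hε1 : ε ≤ 1) {a b : ℝ≥0∞}
    (hab : a ≤ b) : epow ε b ≤ epow ε a := by
  rcases eq_or_ne b ⊤ with hb | hb
  · rw [epow, if_pos hb]
    exact epow_nonneg hε0.le a
  have ha : a ≠ ⊤ := ne_top_of_le_ne_top hb hab
  rw [epow, epow, if_neg ha, if_neg hb]
  exact Real.rpow_le_rpow_of_exponent_ge hε0 hε1 ((ENNReal.toReal_le_toReal ha hb).2 hab)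

lemma kernel_nonneg_of_lower_bound {α : Type*} {K : α → α → ℝ} {R : α → α → ℝ≥0∞} {ε C1 : ℝ}
    (hε : 0 ≤ ε) (hC1 : 0 ≤ C1) (hK : ∀ u w, C1 * epow ε (R u w) ≤ K u w) (u w : α) :
    0 ≤ K u w :=
  (mul_nonneg hC1 (epow_nonneg hε _)).trans (hK u w)

lemma isRootedTree_of_lt {α : Type*} {f : α → α} {v : α} (d : α → ℕ) (hfv : f v = v)
    (hd : ∀ u, u ≠ v → d (f u) < d u) : IsRootedTree f v := by
  refine ⟨hfv, fun u => ?_⟩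
  induction h : d u using Nat.strong_induction_on generalizing u with
  | _ n ih =>
    by_cases hu : u = v
    · exact ⟨0, hu⟩
    obtain ⟨k, hk⟩ := ih _ (h ▸ hd u hu) (f u) rfl
    exact ⟨k + 1, by rwa [Function.iterate_succ_apply]⟩

lemma kerPow_nonneg {K : V → V → ℝ} (hK : ∀ u w, 0 ≤ K u w) (k : ℕ) (u w : V) :
    0 ≤ kerPow K k u w := by
  induction k generalizing u w with
  | zero => unfold kerPow; split <;> norm_num
  | succ k ih => exact sum_nonneg fun x _ => mul_nonneg (hK u x) (ih x w)

lemma exists_pos_of_kerPow_succ_pos {K : V → V → ℝ} (hK : ∀ u w, 0 ≤ K u w) {k : ℕ}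
    {u v : V} (h : 0 < kerPow K (k + 1) u v) : ∃ w, 0 < K u w ∧ 0 < kerPow K k w v := by
  obtain ⟨w, -, hw⟩ := exists_ne_zero_of_sum_ne_zero h.ne'
  exact ⟨w, (hK u w).lt_of_ne (left_ne_zero_of_mul hw).symm,
    (kerPow_nonneg hK k w v).lt_of_ne (right_ne_zero_of_mul hw).symm⟩

/-- Following, from each `u ≠ v`, a positive-probability step that decreases the hitting time
of `v` yields a tree rooted at `v` all of whose edges have positive probability. -/
lemma IsErgodicKernel.exists_treeWeight_pos {K : V → V → ℝ} (hK : ∀ u w, 0 ≤ K u w)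
    (herg : IsErgodicKernel K) (v : V) : ∃ f ∈ rootedTrees v, 0 < treeWeight K v f := by
  classical
  obtain ⟨m, hm⟩ := herg
  have hreach : ∀ u, ∃ k, 0 < kerPow K k u v := fun u => ⟨m, hm u v⟩
  let d : V → ℕ := fun u => Nat.find (hreach u)
  have hstep : ∀ u, u ≠ v → ∃ w, 0 < K u w ∧ d w < d u := by
    intro u hu
    have hpos : 0 < kerPow K (d u) u v := Nat.find_spec (hreach u)
    obtain ⟨k, hk⟩ : ∃ k, d u = k + 1 := Nat.exists_eq_succ_of_ne_zero fun h0 => by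
      simp [h0, kerPow, hu] at hpos
    rw [hk] at hpos
    obtain ⟨w, hKw, hw⟩ := exists_pos_of_kerPow_succ_pos hK hpos
    exact ⟨w, hKw, (Nat.find_min' _ hw).trans_lt (hk ▸ k.lt_succ_self)⟩
  choose g hg using hstep
  let f : V → V := fun u => if hu : u = v then v else g u hu
  have hf : ∀ u (hu : u ≠ v), f u = g u hu := fun u hu => dif_neg hu
  refine ⟨f, mem_filter.2 ⟨mem_univ f, isRootedTree_of_lt d (dif_pos rfl) ?_⟩, ?_⟩
  · exact fun u hu => hf u hu ▸ (hg u hu).2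
  · exact prod_pos fun u hu => hf u (ne_of_mem_erase hu) ▸ (hg u _).1

lemma IsErgodicKernel.treeMu_pos {K : V → V → ℝ} (hK : ∀ u w, 0 ≤ K u w)
    (herg : IsErgodicKernel K) (v : V) : 0 < treeMu K v := by
  obtain ⟨f, hf, hpos⟩ := herg.exists_treeWeight_pos hK v
  exact hpos.trans_le (single_le_sum (fun f _ => prod_nonneg fun u _ => hK u (f u)) hf)

section ResistanceBounds

variable {K : V → V → ℝ} {R : V → V → ℝ≥0∞} {ε : ℝ}

lemma treeWeight_le_of_le {C2 : ℝ} (hε : 0 < ε) (hK0 : ∀ u w, 0 ≤ K u w)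
    (hK : ∀ u w, K u w ≤ C2 * epow ε (R u w)) (v : V) (f : V → V) :
    treeWeight K v f ≤ C2 ^ (Fintype.card V - 1) * epow ε (treeResist R v f) :=
  calc treeWeight K v f ≤ ∏ u ∈ univ.erase v, C2 * epow ε (R u (f u)) :=
        prod_le_prod (fun u _ => hK0 u (f u)) fun u _ => hK u (f u)
    _ = C2 ^ (Fintype.card V - 1) * epow ε (treeResist R v f) := by
        rw [prod_mul_distrib, prod_const, card_erase_of_mem (mem_univ v), card_univ,
          treeResist, epow_sum hε]

lemma le_treeWeight_of_le {C1 : ℝ} (hε : 0 < ε) (hC1 : 0 ≤ C1)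
    (hK : ∀ u w, C1 * epow ε (R u w) ≤ K u w) (v : V) (f : V → V) :
    C1 ^ (Fintype.card V - 1) * epow ε (treeResist R v f) ≤ treeWeight K v f :=
  calc C1 ^ (Fintype.card V - 1) * epow ε (treeResist R v f)
      = ∏ u ∈ univ.erase v, C1 * epow ε (R u (f u)) := by
        rw [prod_mul_distrib, prod_const, card_erase_of_mem (mem_univ v), card_univ,
          treeResist, epow_sum hε]
    _ ≤ treeWeight K v f :=
        prod_le_prod (fun u _ => mul_nonneg hC1 (epow_nonneg hε.le _)) fun u _ => hK u (f u)

lemma treeMu_le {C2 : ℝ} (hε0 : 0 < ε) (hε1 : ε ≤ 1) (hC2 : 0 ≤ C2) (hK0 : ∀ u w, 0 ≤ K u w)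
    (hK : ∀ u w, K u w ≤ C2 * epow ε (R u w)) (v : V) :
    treeMu K v ≤ #(rootedTrees v) * C2 ^ (Fintype.card V - 1) * epow ε (stochPot R v) := by
  rw [mul_assoc, ← nsmul_eq_mul, ← sum_const]
  refine sum_le_sum fun f hf => (treeWeight_le_of_le hε0 hK0 hK v f).trans ?_
  exact mul_le_mul_of_nonneg_left (epow_le_epow_of_exponent_ge hε0 hε1 (inf_le hf))
    (pow_nonneg hC2 _)

lemma le_treeMu {C1 : ℝ} (hε : 0 < ε) (hC1 : 0 ≤ C1)
    (hK : ∀ u w, C1 * epow ε (R u w) ≤ K u w) (v : V) :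
    C1 ^ (Fintype.card V - 1) * epow ε (stochPot R v) ≤ treeMu K v := by
  have hK0 := kernel_nonneg_of_lower_bound hε.le hC1 hK
  have hμ : 0 ≤ treeMu K v := sum_nonneg fun f _ => prod_nonneg fun u _ => hK0 u (f u)
  by_cases htop : stochPot R v = ⊤
  · rwa [epow, if_pos htop, mul_zero]
  obtain ⟨f, hf, hγ⟩ := exists_mem_eq_inf (rootedTrees v)
    (nonempty_of_ne_empty fun h => htop (by rw [stochPot, h, inf_empty])) (treeResist R v)
  rw [stochPot, hγ]
  exact (le_treeWeight_of_le hε hC1 hK v f).trans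
    (single_le_sum (fun f _ => prod_nonneg fun u _ => hK0 u (f u)) hf)

lemma treeMu_div_treeMu_le {C1 C2 : ℝ} (hε0 : 0 < ε) (hε1 : ε ≤ 1) (hC1 : 0 < C1)
    (hC12 : C1 ≤ C2) (hKlow : ∀ u w, C1 * epow ε (R u w) ≤ K u w)
    (hKup : ∀ u w, K u w ≤ C2 * epow ε (R u w)) (herg : IsErgodicKernel K) {v w : V}
    (hγ : stochPot R w ≤ stochPot R v) :
    treeMu K v / treeMu K w ≤
      Fintype.card (V → V) * (C2 / C1) ^ (Fintype.card V - 1) *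
        epow ε (stochPot R v - stochPot R w) := by
  have hK0 := kernel_nonneg_of_lower_bound hε0.le hC1.le hKlow
  have hC2 : 0 ≤ C2 := hC1.le.trans hC12
  -- also when `γ(w) = ∞`, since `∞ - ∞ = 0` in `ℝ≥0∞`
  have hsplit : epow ε (stochPot R v) =
      epow ε (stochPot R v - stochPot R w) * epow ε (stochPot R w) := by
    rw [← epow_add hε0, tsub_add_cancel_of_le hγ]
  rw [div_le_iff₀ (herg.treeMu_pos hK0 w)]
  calc treeMu K v
      ≤ #(rootedTrees v) * C2 ^ (Fintype.card V - 1) * epow ε (stochPot R v) :=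
        treeMu_le hε0 hε1 hC2 hK0 hKup v
    _ ≤ Fintype.card (V → V) * C2 ^ (Fintype.card V - 1) * epow ε (stochPot R v) := by
        gcongr
        · exact epow_nonneg hε0.le _
        · exact_mod_cast card_le_univ _
    _ = Fintype.card (V → V) * (C2 / C1) ^ (Fintype.card V - 1) *
          epow ε (stochPot R v - stochPot R w) *
          (C1 ^ (Fintype.card V - 1) * epow ε (stochPot R w)) := by
        rw [hsplit, div_pow]
        field_simp
    _ ≤ _ := by
        refine mul_le_mul_of_nonneg_left (le_treeMu hε0 hC1.le hKlow w) ?_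
        have := epow_nonneg hε0.le (stochPot R v - stochPot R w)
        have := div_nonneg hC2 hC1.le
        positivity

end ResistanceBounds

theorem stmt8_general (K : ℝ → V → V → ℝ) (R : V → V → ℝ≥0∞) (C1 C2 : ℝ)
    (hC1 : 0 < C1) (hC12 : C1 ≤ C2)
    (hbound : ∀ ε ∈ Set.Ioo (0 : ℝ) 1, ∀ v v',
      C1 * epow ε (R v v') ≤ K ε v v' ∧ K ε v v' ≤ C2 * epow ε (R v v'))
    (hergodic : ∀ ε ∈ Set.Ioo (0 : ℝ) 1, IsErgodicKernel (K ε))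
    (pi : ℝ → V → ℝ)
    (hpi_pos : ∀ ε ∈ Set.Ioo (0 : ℝ) 1, ∀ v, 0 < pi ε v)
    (hpi_sum : ∀ ε ∈ Set.Ioo (0 : ℝ) 1, ∑ v, pi ε v = 1)
    (htree : ∀ ε ∈ Set.Ioo (0 : ℝ) 1, ∀ v v',
      pi ε v * treeMu (K ε) v' = pi ε v' * treeMu (K ε) v)
    (vstar : V) (hvstar : ∀ v, stochPot R vstar ≤ stochPot R v) :
    ∃ C : ℝ, ∀ ε ∈ Set.Ioo (0 : ℝ) 1, ∀ v : V,
      pi ε v ≤ pi ε v / pi ε vstar ∧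
      pi ε v / pi ε vstar ≤ C * epow ε (stochPot R v - stochPot R vstar) := by
  refine ⟨Fintype.card (V → V) * (C2 / C1) ^ (Fintype.card V - 1), fun ε hε v => ?_⟩
  have hKlow : ∀ u w, C1 * epow ε (R u w) ≤ K ε u w := fun u w => (hbound ε hε u w).1
  have hKup : ∀ u w, K ε u w ≤ C2 * epow ε (R u w) := fun u w => (hbound ε hε u w).2
  have hK0 := kernel_nonneg_of_lower_bound hε.1.le hC1.le hKlow
  have hπ : ∀ w, 0 < pi ε w := hpi_pos ε hε
  have hπ_le_one : pi ε vstar ≤ 1 :=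
    hpi_sum ε hε ▸ single_le_sum (fun w _ => (hπ w).le) (mem_univ vstar)
  have hratio : pi ε v / pi ε vstar = treeMu (K ε) v / treeMu (K ε) vstar := by
    rw [div_eq_div_iff (hπ vstar).ne' ((hergodic ε hε).treeMu_pos hK0 vstar).ne',
      htree ε hε v vstar, mul_comm]
  refine ⟨le_div_self (hπ v).le (hπ vstar) hπ_le_one, hratio ▸ ?_⟩
  exact treeMu_div_treeMu_le hε.1 hε.2.le hC1 hC12 hKlow hKup (hergodic ε hε) (hvstar v)

/-- Under the resistance bounds, for the stationary distribution `π^ε` (which by the Markov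
chain tree theorem satisfies `π^ε(v)/π^ε(v') = μ^ε(v)/μ^ε(v')`), with `v*` minimizing the
stochastic potential `γ`, there is a constant `C` independent of `ε` such that
`π^ε(v) ≤ π^ε(v)/π^ε(v*) ≤ C ε^{γ(v) - min γ}` for all `ε ∈ (0,1)`. -/
theorem stmt8 (K : ℝ → V → V → ℝ) (R : V → V → ℝ≥0∞) (C1 C2 : ℝ)
    (hC1 : 0 < C1) (hC12 : C1 ≤ C2) (hcard : 2 ≤ Fintype.card V)
    (hbound : ∀ ε ∈ Set.Ioo (0 : ℝ) 1, ∀ v v',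
      C1 * epow ε (R v v') ≤ K ε v v' ∧ K ε v v' ≤ C2 * epow ε (R v v'))
    (hstoch : ∀ ε ∈ Set.Ioo (0 : ℝ) 1, ∀ v, ∑ v', K ε v v' = 1)
    (hergodic : ∀ ε ∈ Set.Ioo (0 : ℝ) 1, IsErgodicKernel (K ε))
    (pi : ℝ → V → ℝ)
    (hpi_pos : ∀ ε ∈ Set.Ioo (0 : ℝ) 1, ∀ v, 0 < pi ε v)
    (hpi_sum : ∀ ε ∈ Set.Ioo (0 : ℝ) 1, ∑ v, pi ε v = 1)
    (htree : ∀ ε ∈ Set.Ioo (0 : ℝ) 1, ∀ v v',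
      pi ε v * treeMu (K ε) v' = pi ε v' * treeMu (K ε) v)
    (vstar : V) (hvstar : ∀ v, stochPot R vstar ≤ stochPot R v) :
    ∃ C : ℝ, ∀ ε ∈ Set.Ioo (0 : ℝ) 1, ∀ v : V,
      pi ε v ≤ pi ε v / pi ε vstar ∧
      pi ε v / pi ε vstar ≤ C * epow ε (stochPot R v - stochPot R vstar) :=
  stmt8_general K R C1 C2 hC1 hC12 hbound hergodic pi hpi_pos hpi_sum htree vstar hvstar
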